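/- arXiv:1901.07763 — 2 statements merged into one kernel-verified Lean document; each statement's English description precedes it below -/
import Mathlib

section
/- For any complex numbers b_0, b_1, ..., b_M with b_M ≠ 0, there exists c = (c_1, c_2, ...) ∈ ℂ^M (extended by zeros) such that Σ_{i=0}^{M} b_i s_i(t) = b_M s_M(t + c) as polynomials in t = (t_1, t_2, ...). -/
/-!
Write `E(t) = exp(∑ tᵢ zⁱ) = ∑ sⱼ(t) zʲ`. Since `E(t + c) = E(t) E(c)`, comparing coefficients gives
the addition formula `s_M(t + c) = ∑ᵢ sᵢ(t) s_{M-i}(c)`, so it suffices to find `c` with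
`sⱼ(c) = b_{M-j} / b_M` for `1 ≤ j ≤ M`. Such a `c` is found coordinate by coordinate, because
`sⱼ(c) = cⱼ + (a polynomial in c₁, …, c_{j-1})`.
-/

/-- `exp(c z^m)` as a formal power series: `∑_k c^k z^{mk} / k!`. -/
noncomputable def expMono (c : ℂ) (m : ℕ) : PowerSeries ℂ :=
  PowerSeries.mk fun k => if m ∣ k then c ^ (k / m) / (Nat.factorial (k / m) : ℂ) else 0

/-- The elementary Schur polynomial `s_j(t)`: the coefficient of `z^j` in
`exp(∑_{i=1}^∞ t_i z^i)` (only the factors with `i ≤ j` contribute to this coefficient). -/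
noncomputable def schur (t : ℕ → ℂ) (j : ℕ) : ℂ :=
  PowerSeries.coeff (R := ℂ) j (∏ i ∈ Finset.range j, expMono (t (i + 1)) (i + 1))

open PowerSeries Finset

section

variable {R : Type*} [CommRing R]

theorem dvd_prod_sub_one {ι : Type*} {a : R} {s : Finset ι} {f : ι → R}
    (h : ∀ i ∈ s, a ∣ f i - 1) : a ∣ ∏ i ∈ s, f i - 1 := by
  refine prod_induction f (fun x => a ∣ x - 1) (fun x y hx hy => ?_) (by simp) h
  rw [show x * y - 1 = x * (y - 1) + (x - 1) by ring]
  exact dvd_add (dvd_mul_of_dvd_right hy x) hx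

theorem PowerSeries.coeff_mul_of_X_pow_dvd_sub_one {j : ℕ} {F : R⟦X⟧}
    (hF : X ^ (j + 1) ∣ F - 1) (G : R⟦X⟧) : coeff j (G * F) = coeff j G := by
  have hdvd : X ^ (j + 1) ∣ G * F - G := by
    rw [show G * F - G = G * (F - 1) by ring]
    exact dvd_mul_of_dvd_right hF G
  rw [← sub_eq_zero, ← map_sub]
  exact X_pow_dvd_iff.mp hdvd j j.lt_succ_self

theorem PowerSeries.coeff_mul_eq_add_of_X_pow_dvd_sub_one {m : ℕ} (hm : 0 < m) {F G : R⟦X⟧}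
    (hF : X ^ m ∣ F - 1) (hG : constantCoeff G = 1) :
    coeff m (G * F) = coeff m G + coeff m F := by
  obtain ⟨H, hH⟩ := hF
  rw [sub_eq_iff_eq_add'.mp hH, mul_add, mul_one, mul_left_comm]
  simp only [map_add, coeff_X_pow_mul', le_refl, if_true, Nat.sub_self, coeff_zero_eq_constantCoeff,
    map_mul, hG, one_mul, coeff_one, hm.ne', if_false, zero_add]

end

theorem coeff_expMono (c : ℂ) (m k : ℕ) :
    coeff k (expMono c m) = if m ∣ k then c ^ (k / m) / (k / m).factorial else 0 :=
  coeff_mk _ _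

theorem expMono_eq_expand {m : ℕ} (hm : m ≠ 0) (c : ℂ) :
    expMono c m = expand m hm (rescale c (exp ℂ)) := by
  ext k
  simp [coeff_expMono, coeff_expand, coeff_exp, div_eq_mul_inv]

theorem expMono_add {m : ℕ} (hm : m ≠ 0) (a b : ℂ) :
    expMono (a + b) m = expMono a m * expMono b m := by
  simp only [expMono_eq_expand hm, ← map_mul, exp_mul_exp_eq_exp_add]

theorem X_pow_dvd_expMono_sub_one (c : ℂ) (m : ℕ) : X ^ m ∣ expMono c m - 1 := by
  refine X_pow_dvd_iff.mpr fun k hk => ?_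
  rcases k.eq_zero_or_pos with rfl | hk0
  · rw [map_sub, coeff_expMono, coeff_one]
    simp
  · have : ¬ m ∣ k := fun h => (Nat.le_of_dvd hk0 h).not_gt hk
    simp [coeff_expMono, this, coeff_one, hk0.ne']

theorem coeff_expMono_self (c : ℂ) {m : ℕ} (hm : 0 < m) : coeff m (expMono c m) = c := by
  simp [coeff_expMono, Nat.div_self hm]

-- `exp (t₁ z + ⋯ + tₙ zⁿ)`
noncomputable def expSum (t : ℕ → ℂ) (n : ℕ) : ℂ⟦X⟧ :=
  ∏ i ∈ range n, expMono (t (i + 1)) (i + 1)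

theorem expSum_succ (t : ℕ → ℂ) (n : ℕ) :
    expSum t (n + 1) = expSum t n * expMono (t (n + 1)) (n + 1) :=
  prod_range_succ _ _

theorem schur_eq_coeff_expSum (t : ℕ → ℂ) (j : ℕ) : schur t j = coeff j (expSum t j) := rfl

theorem expSum_congr {t t' : ℕ → ℂ} {n : ℕ} (h : ∀ i, 0 < i → i ≤ n → t i = t' i) :
    expSum t n = expSum t' n :=
  prod_congr rfl fun i hi => by rw [h (i + 1) i.succ_pos (mem_range.mp hi)]

theorem expSum_add (t c : ℕ → ℂ) (n : ℕ) :
    expSum (fun i => t i + c i) n = expSum t n * expSum c n := by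
  rw [expSum, expSum, expSum, ← prod_mul_distrib]
  exact prod_congr rfl fun i _ => expMono_add i.succ_ne_zero _ _

theorem constantCoeff_expSum (t : ℕ → ℂ) (n : ℕ) : constantCoeff (expSum t n) = 1 := by
  simp [expSum, map_prod, ← coeff_zero_eq_constantCoeff, coeff_expMono]

theorem coeff_expSum_of_le (t : ℕ → ℂ) {j n : ℕ} (h : j ≤ n) :
    coeff j (expSum t n) = schur t j := by
  rw [expSum, ← prod_range_mul_prod_Ico _ h, coeff_mul_of_X_pow_dvd_sub_one, schur]
  refine dvd_prod_sub_one fun i hi => ?_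
  exact (pow_dvd_pow X (by simpa using (mem_Ico.mp hi).1)).trans (X_pow_dvd_expMono_sub_one _ _)

theorem schur_succ (t : ℕ → ℂ) (n : ℕ) :
    schur t (n + 1) = coeff (n + 1) (expSum t n) + t (n + 1) := by
  rw [schur_eq_coeff_expSum, expSum_succ,
    coeff_mul_eq_add_of_X_pow_dvd_sub_one n.add_one_pos (X_pow_dvd_expMono_sub_one _ _)
      (constantCoeff_expSum t n), coeff_expMono_self _ n.add_one_pos]

theorem schur_zero (t : ℕ → ℂ) : schur t 0 = 1 := by
  simp [schur]

theorem schur_add (t c : ℕ → ℂ) (M : ℕ) :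
    schur (fun i => t i + c i) M = ∑ i ∈ range (M + 1), schur t i * schur c (M - i) := by
  rw [schur_eq_coeff_expSum, expSum_add, coeff_mul, Nat.sum_antidiagonal_eq_sum_range_succ_mk]
  refine sum_congr rfl fun i hi => ?_
  rw [coeff_expSum_of_le t (Nat.lt_succ_iff.mp (mem_range.mp hi)),
    coeff_expSum_of_le c (Nat.sub_le M i)]

theorem exists_schur_eq (a : ℕ → ℂ) (n : ℕ) :
    ∃ c : ℕ → ℂ, (∀ i, n < i → c i = 0) ∧ ∀ j, 0 < j → j ≤ n → schur c j = a j := by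
  induction n with
  | zero => exact ⟨0, fun _ _ => rfl, fun j hj hjn => by omega⟩
  | succ n ih =>
    obtain ⟨c, hc0, hc⟩ := ih
    set c' := Function.update c (n + 1) (a (n + 1) - coeff (n + 1) (expSum c n)) with hc'
    have hc'c : ∀ i, i ≤ n → c' i = c i := fun i hi => Function.update_of_ne (by omega) _ _
    refine ⟨c', fun i hi => ?_, fun j hj hjn => ?_⟩
    · rw [hc', Function.update_of_ne (by omega), hc0 i (by omega)]
    rcases hjn.lt_or_eq with hlt | rfl
    · rw [schur_eq_coeff_expSum, expSum_congr fun i _ hi => hc'c i (by omega),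
        ← schur_eq_coeff_expSum, hc j hj (by omega)]
    · rw [schur_succ, expSum_congr fun i _ hi => hc'c i hi, hc', Function.update_self]
      ring

/-- Any linear combination `∑_{i=0}^M b_i s_i(t)` with `b_M ≠ 0` equals
`b_M s_M(t + c)` for some `c ∈ ℂ^M` (extended by zeros). -/
theorem schur_shift_combination (M : ℕ) (b : ℕ → ℂ) (hb : b M ≠ 0) :
    ∃ c : ℕ → ℂ, (∀ i, M < i → c i = 0) ∧
      ∀ t : ℕ → ℂ,
        ∑ i ∈ Finset.range (M + 1), b i * schur t i
          = b M * schur (fun i => t i + c i) M := by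
  obtain ⟨c, hc0, hc⟩ := exists_schur_eq (fun j => b (M - j) / b M) M
  refine ⟨c, hc0, fun t => ?_⟩
  rw [schur_add, mul_sum]
  refine sum_congr rfl fun i hi => ?_
  rcases (Nat.lt_succ_iff.mp (mem_range.mp hi)).lt_or_eq with hiM | rfl
  · rw [hc (M - i) (by omega) (Nat.sub_le M i), Nat.sub_sub_self hiM.le]
    field_simp
  · rw [Nat.sub_self, schur_zero, mul_one, mul_comm]
end

section
/- A nonzero element g_k ∈ F^{(k)} lies in the GL_∞-orbit O_k = R(GL_∞)|k⟩ if and only if Σ_{i ∈ ℤ+1/2} ψ^+_i g_k ⊗ ψ^-_{-i} g_k = 0 in F ⊗ F. -/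
/-- A semi-infinite (Maya) sequence: a strictly decreasing `f : ℕ → ℤ` with
`f n = k - n` for `n ≫ 0`; it encodes the semi-infinite monomial
`e_{f 0} ∧ e_{f 1} ∧ e_{f 2} ∧ ⋯` (strictly decreasing indices, eventually
decreasing by exactly one). -/
def SemiInfinite (f : ℕ → ℤ) : Prop :=
  StrictAnti f ∧ ∃ N : ℕ, ∃ k : ℤ, ∀ n ≥ N, f n = k - n

/-- Index set of the basis of semi-infinite monomials of the wedge space `F`. -/
def Maya : Type := {f : ℕ → ℤ // SemiInfinite f}

/-- Delete the `s`-th entry (0-indexed) of a sequence. -/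
def deleteAt (f : ℕ → ℤ) (s : ℕ) : ℕ → ℤ := fun n => if n < s then f n else f (n + 1)

/-- Insert the value `m` at position `s` (0-indexed) of a sequence. -/
def insertAt (f : ℕ → ℤ) (m : ℤ) (s : ℕ) : ℕ → ℤ :=
  fun n => if n < s then f n else if n = s then m else f (n - 1)

/-- `f` has charge `k`: `f n = k - n` for `n ≫ 0`. -/
def HasCharge (f : ℕ → ℤ) (k : ℤ) : Prop := ∃ N : ℕ, ∀ n ≥ N, f n = k - n

/-- The vacuum monomial `|k⟩ = e_k ∧ e_{k-1} ∧ e_{k-2} ∧ ⋯`. -/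
def vacSeq (k : ℤ) : Maya :=
  ⟨fun n => k - n, by intro a b hab; dsimp only; omega, 0, k, fun n _ => rfl⟩

open scoped TensorProduct

/-!
On the monomial basis `psiP m` adds and `psiM m` removes the entry `m`, with the sign
`(-1) ^ (number of larger entries)`; from this one checks the canonical anticommutation relations.
Write `S x = ∑ psiP m x ⊗ psiM m x` and `w = ∑ c_m psiP m` for a wedge operator.

If `g` is in the orbit then `S g = 0`: for the vacuum `|k⟩` every term vanishes (`psiP m |k⟩ = 0`
for `m ≤ k` and `psiM m |k⟩ = 0` for `m > k`), and the relations give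
`S (w x) = (w ⊗ w) (S x) - w (w x) ⊗ x` with `w ∘ w = 0`.

Conversely let `a` be the largest leading entry of a monomial of `g`, so that `psiM a g ≠ 0`.
Pairing the second factor of `S g = 0` with a coordinate functional produces a wedge operator `w`
with `w g = 0` whose coefficient `c` of `e_a` is nonzero; applying `psiM a` gives
`c • g = w (psiM a g)`. Since `S (psiM a x) = (psiM a ⊗ psiM a) (S x)`, the vector `psiM a g`
satisfies `S = 0` again, has charge `k - 1` and agrees with the vacuum one position earlier, so
induction on that position applies.
-/

open Filter

lemma neg_one_pow_eq_neg_neg_one_pow {R : Type*} [Ring R] {a b : ℕ} (h : (a + b) % 2 = 1) :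
    (-1 : R) ^ a = -(-1) ^ b := by
  rw [← mul_neg_one ((-1 : R) ^ b), ← pow_succ, neg_one_pow_eq_pow_mod_two,
    neg_one_pow_eq_pow_mod_two (b + 1)]
  congr 1
  omega

lemma eq_zero_of_eq_neg (K : Type*) {V : Type*} [DivisionRing K] [CharZero K] [AddCommGroup V]
    [Module K V] {x : V} (h : x = -x) : x = 0 := by
  have h2 : (2 : K) • x = 0 := by
    rw [two_smul]
    nth_rewrite 1 [h]
    exact neg_add_cancel x
  exact (smul_eq_zero.mp h2).resolve_left two_ne_zero

lemma eventually_eq_zero_of_basis {ι α R M N : Type*} [Semiring R] [AddCommMonoid M]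
    [Module R M] [AddCommMonoid N] [Module R N] (b : Module.Basis ι R M) (T : α → M →ₗ[R] N)
    {l : Filter α} (h : ∀ i, ∀ᶠ a in l, T a (b i) = 0) (x : M) : ∀ᶠ a in l, T a x = 0 := by
  induction b.mem_span x using Submodule.span_induction with
  | mem y hy =>
    obtain ⟨i, rfl⟩ := hy
    exact h i
  | zero => simp
  | add y z _ _ hy hz =>
    filter_upwards [hy, hz] with a hya hza
    rw [map_add, hya, hza, add_zero]
  | smul r y _ hy =>
    filter_upwards [hy] with a hya
    rw [map_smul, hya, smul_zero]

lemma range_deleteAt {f : ℕ → ℤ} (hf : Function.Injective f) (s : ℕ) :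
    Set.range (deleteAt f s) = Set.range f \ {f s} := by
  ext x
  simp only [Set.mem_range, Set.mem_sdiff, Set.mem_singleton_iff, deleteAt]
  constructor
  · rintro ⟨i, rfl⟩
    split_ifs with h
    · exact ⟨⟨i, rfl⟩, fun e => by have := hf e; omega⟩
    · exact ⟨⟨i + 1, rfl⟩, fun e => by have := hf e; omega⟩
  · rintro ⟨⟨i, rfl⟩, hi⟩
    rcases lt_trichotomy i s with h | rfl | h
    · exact ⟨i, if_pos h⟩
    · exact absurd rfl hi
    · exact ⟨i - 1, by rw [if_neg (by omega), Nat.sub_add_cancel (by omega)]⟩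

lemma range_insertAt (f : ℕ → ℤ) (m : ℤ) (s : ℕ) :
    Set.range (insertAt f m s) = insert m (Set.range f) := by
  ext x
  simp only [Set.mem_range, Set.mem_insert_iff, insertAt]
  constructor
  · rintro ⟨i, rfl⟩
    split_ifs
    exacts [Or.inr ⟨i, rfl⟩, Or.inl rfl, Or.inr ⟨i - 1, rfl⟩]
  · rintro (rfl | ⟨i, rfl⟩)
    · exact ⟨s, by simp⟩
    · by_cases h : i < s
      · exact ⟨i, if_pos h⟩
      · exact ⟨i + 1, by rw [if_neg (by omega), if_neg (by omega), Nat.add_sub_cancel]⟩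

lemma deleteAt_insertAt (f : ℕ → ℤ) (m : ℤ) (s : ℕ) : deleteAt (insertAt f m s) s = f := by
  funext i
  simp only [deleteAt, insertAt]
  split_ifs <;> first | rfl | omega

lemma vacSeq_apply (k : ℤ) (n : ℕ) : (vacSeq k).1 n = k - n := rfl

namespace Maya

variable (f : Maya)

lemma strictAnti : StrictAnti f.1 := f.2.1

def entries : Set ℤ := Set.range f.1

lemma apply_mem_entries (s : ℕ) : f.1 s ∈ f.entries := ⟨s, rfl⟩

lemma ext_of_entries_eq {f g : Maya} (h : f.entries = g.entries) : f = g :=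
  Subtype.ext <| (f.strictAnti.dual_right.range_inj g.strictAnti.dual_right).mp
    (by rw [Set.range_comp, Set.range_comp]; exact congrArg _ h)

lemma apply_le_apply_zero (s : ℕ) : f.1 s ≤ f.1 0 :=
  f.strictAnti.antitone (Nat.zero_le s)

lemma exists_apply_le (m : ℤ) : ∃ n, f.1 n ≤ m := by
  obtain ⟨N, k, hk⟩ := f.2.2
  exact ⟨N + (k - m).toNat, by rw [hk _ (Nat.le_add_right _ _)]; push_cast; omega⟩

lemma eventually_mem_entries : ∀ᶠ m in atBot, m ∈ f.entries := by
  obtain ⟨N, k, hk⟩ := f.2.2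
  filter_upwards [eventually_le_atBot (k - N)] with m hm
  exact ⟨(k - m).toNat, by rw [hk _ (by omega)]; omega⟩

lemma eventually_not_mem_entries : ∀ᶠ m in atTop, m ∉ f.entries := by
  filter_upwards [eventually_gt_atTop (f.1 0)] with m hm
  rintro ⟨s, rfl⟩
  exact (f.apply_le_apply_zero s).not_gt hm

/-- The number of entries of `f` greater than `m`: the position of `m` in `f`, or the position
where `m` has to be inserted. -/
noncomputable def pos (m : ℤ) : ℕ := Nat.find (f.exists_apply_le m)

lemma lt_pos_iff {m : ℤ} {i : ℕ} : i < f.pos m ↔ m < f.1 i := by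
  constructor
  · intro h
    exact lt_of_not_ge (Nat.find_min (f.exists_apply_le m) h)
  · intro h
    by_contra hi
    exact (f.strictAnti.antitone (not_lt.mp hi)).trans (Nat.find_spec (f.exists_apply_le m))
      |>.not_gt h

lemma pos_eq_of_forall {m : ℤ} {p : ℕ} (h : ∀ i, i < p ↔ m < f.1 i) : f.pos m = p :=
  eq_of_forall_lt_iff fun i => f.lt_pos_iff.trans (h i).symm

lemma apply_pos_le (m : ℤ) : f.1 (f.pos m) ≤ m :=
  Nat.find_spec (f.exists_apply_le m)

lemma semiInfinite_deleteAt (s : ℕ) : SemiInfinite (deleteAt f.1 s) := by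
  constructor
  · intro a b hab
    unfold deleteAt
    split_ifs <;> exact f.strictAnti (by omega)
  · obtain ⟨N, k, hk⟩ := f.2.2
    refine ⟨max N s, k - 1, fun n hn => ?_⟩
    unfold deleteAt
    rw [if_neg (by omega), hk (n + 1) (by omega)]
    push_cast
    ring

lemma semiInfinite_insertAt {m : ℤ} (hm : m ∉ f.entries) :
    SemiInfinite (insertAt f.1 m (f.pos m)) := by
  have hpos : f.1 (f.pos m) < m := (f.apply_pos_le m).lt_of_ne fun h => hm ⟨_, h⟩
  have hlt : ∀ n, f.pos m ≤ n → f.1 n < m := fun n hn => (f.strictAnti.antitone hn).trans_lt hpos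
  constructor
  · intro a b hab
    unfold insertAt
    split_ifs <;>
      first
        | exact f.strictAnti (by omega)
        | exact f.lt_pos_iff.mp (by omega)
        | exact hlt (b - 1) (by omega)
        | omega
  · obtain ⟨N, k, hk⟩ := f.2.2
    refine ⟨max (N + 1) (f.pos m + 1), k + 1, fun n hn => ?_⟩
    unfold insertAt
    rw [if_neg (by omega), if_neg (by omega), hk (n - 1) (by omega)]
    push_cast [Nat.cast_sub (by omega : 1 ≤ n)]
    ring

def removeAt (s : ℕ) : Maya := ⟨deleteAt f.1 s, semiInfinite_deleteAt f s⟩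

lemma entries_removeAt (s : ℕ) : (f.removeAt s).entries = f.entries \ {f.1 s} :=
  range_deleteAt f.strictAnti.injective s

lemma eq_of_apply_zero_of_removeAt_zero {f g : Maya} (h0 : f.1 0 = g.1 0)
    (h : f.removeAt 0 = g.removeAt 0) : f = g := by
  refine ext_of_entries_eq ?_
  have := congrArg entries h
  simp only [entries_removeAt, h0] at this
  rw [← Set.insert_sdiff_self_of_mem (f.apply_mem_entries 0), h0, this,
    Set.insert_sdiff_self_of_mem (h0 ▸ g.apply_mem_entries 0)]

open Classical in
/-- Adds `m` to the entries of `f`; does nothing if `m` is already an entry. -/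
noncomputable def addEntry (m : ℤ) : Maya :=
  if hm : m ∈ f.entries then f else ⟨insertAt f.1 m (f.pos m), semiInfinite_insertAt f hm⟩

variable {f}

lemma addEntry_of_not_mem {m : ℤ} (hm : m ∉ f.entries) :
    (f.addEntry m).1 = insertAt f.1 m (f.pos m) := by
  simp [addEntry, hm]

variable (f)

lemma entries_addEntry (m : ℤ) : (f.addEntry m).entries = insert m f.entries := by
  by_cases hm : m ∈ f.entries
  · simp [addEntry, hm]
  · rw [entries, addEntry_of_not_mem hm, range_insertAt, entries]

lemma mem_entries_addEntry (m : ℤ) : m ∈ (f.addEntry m).entries := by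
  rw [entries_addEntry]
  exact Set.mem_insert m _

lemma addEntry_comm (m n : ℤ) : (f.addEntry m).addEntry n = (f.addEntry n).addEntry m :=
  ext_of_entries_eq (by simp only [entries_addEntry, Set.insert_comm])

variable {f}

lemma exists_eq_addEntry {m : ℤ} (hm : m ∈ f.entries) :
    ∃ g : Maya, m ∉ g.entries ∧ f = g.addEntry m := by
  obtain ⟨s, rfl⟩ := hm
  refine ⟨f.removeAt s, by simp [entries_removeAt], ext_of_entries_eq ?_⟩
  rw [entries_addEntry, entries_removeAt, Set.insert_sdiff_singleton,
    Set.insert_eq_of_mem (f.apply_mem_entries s)]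

lemma pos_addEntry {n : ℤ} (hn : n ∉ f.entries) (m : ℤ) :
    (f.addEntry n).pos m = f.pos m + if m < n then 1 else 0 := by
  refine pos_eq_of_forall _ fun i => ?_
  rw [addEntry_of_not_mem hn]
  have := f.apply_pos_le m
  have := f.apply_pos_le n
  have := f.lt_pos_iff (m := m) (i := i)
  have := f.lt_pos_iff (m := m) (i := i - 1)
  have := f.lt_pos_iff (m := m) (i := f.pos m - 1)
  have := f.lt_pos_iff (m := n) (i := f.pos m)
  have := f.lt_pos_iff (m := n) (i := f.pos m - 1)
  unfold insertAt
  split_ifs <;> omega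

lemma pos_addEntry_add_pos_addEntry {m n : ℤ} (hm : m ∉ f.entries) (hn : n ∉ f.entries)
    (hmn : m ≠ n) : (f.addEntry m).pos n + (f.addEntry n).pos m = f.pos m + f.pos n + 1 := by
  rw [pos_addEntry hm, pos_addEntry hn]
  rcases hmn.lt_or_gt with h | h <;> simp [h, h.not_gt] <;> omega

lemma mem_entries_vacSeq {k m : ℤ} : m ∈ (vacSeq k).entries ↔ m ≤ k :=
  ⟨fun ⟨n, hn⟩ => by rw [← hn, vacSeq_apply]; omega,
    fun h => ⟨(k - m).toNat, by rw [vacSeq_apply]; omega⟩⟩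

lemma addEntry_vacSeq (k : ℤ) : (vacSeq k).addEntry (k + 1) = vacSeq (k + 1) :=
  ext_of_entries_eq <| Set.ext fun m => by
    simp only [entries_addEntry, Set.mem_insert_iff, mem_entries_vacSeq]
    omega

lemma pos_vacSeq (k : ℤ) : (vacSeq k).pos (k + 1) = 0 :=
  pos_eq_of_forall _ fun i => by rw [vacSeq_apply]; omega

def vacuumFrom (N : ℕ) (k : ℤ) : Set Maya := {f | ∀ n ≥ N, f.1 n = k - n}

lemma vacuumFrom_zero (k : ℤ) : vacuumFrom 0 k = {vacSeq k} :=
  Set.ext fun f => ⟨fun hf => Subtype.ext (funext fun n => hf n n.zero_le), fun h n _ => by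
    rw [h]; rfl⟩

lemma removeAt_mem_vacuumFrom {N : ℕ} {k : ℤ} {f : Maya} (hf : f ∈ vacuumFrom (N + 1) k) {s : ℕ}
    (hs : k - N ≤ f.1 s) : f.removeAt s ∈ vacuumFrom N (k - 1) := by
  have hsN : s ≤ N := by
    by_contra h
    have := f.strictAnti.antitone (show N + 1 ≤ s by omega)
    rw [hf (N + 1) le_rfl] at this
    push_cast at this
    omega
  intro n hn
  change deleteAt f.1 s n = _
  rw [deleteAt, if_neg (by omega), hf (n + 1) (by omega)]
  push_cast
  ring

end Maya

/-- `psiP m` wedges with `e_m` and `psiM m` contracts `e_m`, as prescribed on the monomial basis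
`B`. -/
structure SemiInfiniteWedge (F : Type*) [AddCommGroup F] [Module ℂ F] where
  B : Module.Basis Maya ℂ F
  psiP : ℤ → F →ₗ[ℂ] F
  psiM : ℤ → F →ₗ[ℂ] F
  psiP_basis_of_mem : ∀ (f : Maya) (m : ℤ), (∃ s, f.1 s = m) → psiP m (B f) = 0
  psiP_basis : ∀ (f g : Maya) (m : ℤ) (s : ℕ), (∀ n, n < s ↔ m < f.1 n) →
    g.1 = insertAt f.1 m s → psiP m (B f) = ((-1 : ℂ)) ^ s • B g
  psiM_basis_of_not_mem : ∀ (f : Maya) (m : ℤ), (∀ s, f.1 s ≠ m) → psiM m (B f) = 0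
  psiM_basis : ∀ (f g : Maya) (m : ℤ) (s : ℕ), f.1 s = m →
    g.1 = deleteAt f.1 s → psiM m (B f) = ((-1 : ℂ)) ^ s • B g

namespace SemiInfiniteWedge

open TensorProduct Submodule

variable {F : Type*} [AddCommGroup F] [Module ℂ F] (W : SemiInfiniteWedge F)

section Basis

variable {f : Maya} {m n : ℤ}

lemma psiP_basis_eq_zero (hm : m ∈ f.entries) : W.psiP m (W.B f) = 0 :=
  W.psiP_basis_of_mem f m hm

lemma psiM_basis_eq_zero (hm : m ∉ f.entries) : W.psiM m (W.B f) = 0 :=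
  W.psiM_basis_of_not_mem f m fun s hs => hm ⟨s, hs⟩

lemma psiP_basis_addEntry (hm : m ∉ f.entries) :
    W.psiP m (W.B f) = (-1 : ℂ) ^ f.pos m • W.B (f.addEntry m) :=
  W.psiP_basis f _ m _ (fun _ => f.lt_pos_iff) (Maya.addEntry_of_not_mem hm)

lemma psiM_basis_addEntry (hm : m ∉ f.entries) :
    W.psiM m (W.B (f.addEntry m)) = (-1 : ℂ) ^ f.pos m • W.B f :=
  W.psiM_basis _ f m _ (by simp [Maya.addEntry_of_not_mem hm, insertAt])
    (by rw [Maya.addEntry_of_not_mem hm, deleteAt_insertAt])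

lemma psiP_psiP_basis_of_mem (hm : m ∈ f.entries) (n : ℤ) :
    W.psiP m (W.psiP n (W.B f)) = 0 := by
  by_cases hn : n ∈ f.entries
  · rw [W.psiP_basis_eq_zero hn, map_zero]
  · rw [W.psiP_basis_addEntry hn, map_smul, W.psiP_basis_eq_zero, smul_zero]
    simp [Maya.entries_addEntry, hm]

lemma psiM_psiM_basis_of_not_mem (hn : n ∉ f.entries) (m : ℤ) :
    W.psiM n (W.psiM m (W.B f)) = 0 := by
  by_cases hm : m ∈ f.entries
  · obtain ⟨g, hg, rfl⟩ := Maya.exists_eq_addEntry hm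
    rw [W.psiM_basis_addEntry hg, map_smul, W.psiM_basis_eq_zero, smul_zero]
    exact fun h => hn (by rw [Maya.entries_addEntry]; exact Set.mem_insert_of_mem m h)
  · rw [W.psiM_basis_eq_zero hm, map_zero]

lemma psiP_psiP_basis (f : Maya) (m n : ℤ) :
    W.psiP m (W.psiP n (W.B f)) = -W.psiP n (W.psiP m (W.B f)) := by
  by_cases hm : m ∈ f.entries
  · rw [W.psiP_psiP_basis_of_mem hm, W.psiP_basis_eq_zero hm, map_zero, neg_zero]
  by_cases hn : n ∈ f.entries
  · rw [W.psiP_psiP_basis_of_mem hn, W.psiP_basis_eq_zero hn, map_zero, neg_zero]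
  rcases eq_or_ne m n with rfl | hmn
  · rw [W.psiP_basis_addEntry hm, map_smul, W.psiP_basis_eq_zero (Maya.mem_entries_addEntry f m),
      smul_zero, neg_zero]
  have hm' : m ∉ (f.addEntry n).entries := by simp [Maya.entries_addEntry, hmn, hm]
  have hn' : n ∉ (f.addEntry m).entries := by simp [Maya.entries_addEntry, hmn.symm, hn]
  rw [W.psiP_basis_addEntry hn, map_smul, W.psiP_basis_addEntry hm', W.psiP_basis_addEntry hm,
    map_smul, W.psiP_basis_addEntry hn', Maya.addEntry_comm f n m, smul_smul, smul_smul,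
    ← pow_add, ← pow_add, ← neg_smul, neg_one_pow_eq_neg_neg_one_pow]
  have := Maya.pos_addEntry_add_pos_addEntry hm hn hmn
  omega

lemma psiM_psiM_basis (f : Maya) (m n : ℤ) :
    W.psiM m (W.psiM n (W.B f)) = -W.psiM n (W.psiM m (W.B f)) := by
  rcases em' (n ∈ f.entries) with hn | hn
  · rw [W.psiM_psiM_basis_of_not_mem hn, W.psiM_basis_eq_zero hn, map_zero, neg_zero]
  rcases em' (m ∈ f.entries) with hm | hm
  · rw [W.psiM_psiM_basis_of_not_mem hm, W.psiM_basis_eq_zero hm, map_zero, neg_zero]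
  obtain ⟨g, hng, rfl⟩ := Maya.exists_eq_addEntry hn
  rcases eq_or_ne m n with rfl | hmn
  · rw [W.psiM_basis_addEntry hng, map_smul, W.psiM_basis_eq_zero hng, smul_zero, neg_zero]
  have hmg : m ∈ g.entries := by simpa [Maya.entries_addEntry, hmn] using hm
  obtain ⟨h, hmh, rfl⟩ := Maya.exists_eq_addEntry hmg
  have hnh : n ∉ h.entries := fun hn => hng (by simp [Maya.entries_addEntry, hn])
  have hnm : n ∉ (h.addEntry m).entries := hng
  have hmn' : m ∉ (h.addEntry n).entries := by simp [Maya.entries_addEntry, hmn, hmh]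
  rw [W.psiM_basis_addEntry hnm, map_smul, W.psiM_basis_addEntry hmh, Maya.addEntry_comm h m n,
    W.psiM_basis_addEntry hmn', map_smul, W.psiM_basis_addEntry hnh, smul_smul, smul_smul,
    ← pow_add, ← pow_add, ← neg_smul, neg_one_pow_eq_neg_neg_one_pow]
  have := Maya.pos_addEntry_add_pos_addEntry hmh hnh hmn
  omega

lemma psiM_psiP_basis_add_self (f : Maya) (m : ℤ) :
    W.psiM m (W.psiP m (W.B f)) + W.psiP m (W.psiM m (W.B f)) = W.B f := by
  have hsq : ∀ p : ℕ, (-1 : ℂ) ^ p * (-1) ^ p = 1 := fun p => by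
    rw [← pow_add, Even.neg_one_pow ⟨p, rfl⟩]
  by_cases hm : m ∈ f.entries
  · obtain ⟨g, hmg, rfl⟩ := Maya.exists_eq_addEntry hm
    rw [W.psiP_basis_eq_zero hm, map_zero, zero_add, W.psiM_basis_addEntry hmg, map_smul,
      W.psiP_basis_addEntry hmg, smul_smul, hsq, one_smul]
  · rw [W.psiM_basis_eq_zero hm, map_zero, add_zero, W.psiP_basis_addEntry hm, map_smul,
      W.psiM_basis_addEntry hm, smul_smul, hsq, one_smul]

lemma psiM_psiP_basis_add_of_ne (f : Maya) {m n : ℤ} (hmn : m ≠ n) :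
    W.psiM m (W.psiP n (W.B f)) + W.psiP n (W.psiM m (W.B f)) = 0 := by
  rcases em' (m ∈ f.entries) with hm | hm
  · rw [W.psiM_basis_eq_zero hm, map_zero, add_zero]
    by_cases hn : n ∈ f.entries
    · rw [W.psiP_basis_eq_zero hn, map_zero]
    · rw [W.psiP_basis_addEntry hn, map_smul, W.psiM_basis_eq_zero, smul_zero]
      simp [Maya.entries_addEntry, hmn, hm]
  obtain ⟨g, hmg, rfl⟩ := Maya.exists_eq_addEntry hm
  rw [W.psiM_basis_addEntry hmg, map_smul]
  by_cases hn : n ∈ g.entries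
  · rw [W.psiP_basis_eq_zero hn, smul_zero, add_zero, W.psiP_basis_eq_zero, map_zero]
    simp [Maya.entries_addEntry, hn]
  have hnm : n ∉ (g.addEntry m).entries := by simp [Maya.entries_addEntry, hmn.symm, hn]
  have hmn' : m ∉ (g.addEntry n).entries := by simp [Maya.entries_addEntry, hmn, hmg]
  rw [W.psiP_basis_addEntry hnm, map_smul, Maya.addEntry_comm g m n, W.psiM_basis_addEntry hmn',
    W.psiP_basis_addEntry hn, smul_smul, smul_smul, ← pow_add, ← pow_add, ← add_smul,
    neg_one_pow_eq_neg_neg_one_pow, neg_add_cancel, zero_smul]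
  have := Maya.pos_addEntry_add_pos_addEntry hmg hn hmn
  omega

end Basis

lemma psiP_psiP (m n : ℤ) (x : F) : W.psiP m (W.psiP n x) = -W.psiP n (W.psiP m x) :=
  LinearMap.congr_fun (W.B.ext fun f => W.psiP_psiP_basis f m n :
    W.psiP m ∘ₗ W.psiP n = -(W.psiP n ∘ₗ W.psiP m)) x

lemma psiM_psiM (m n : ℤ) (x : F) : W.psiM m (W.psiM n x) = -W.psiM n (W.psiM m x) :=
  LinearMap.congr_fun (W.B.ext fun f => W.psiM_psiM_basis f m n :
    W.psiM m ∘ₗ W.psiM n = -(W.psiM n ∘ₗ W.psiM m)) x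

lemma psiM_psiM_self (m : ℤ) (x : F) : W.psiM m (W.psiM m x) = 0 :=
  eq_zero_of_eq_neg ℂ (W.psiM_psiM m m x)

lemma psiM_psiP_add_self (m : ℤ) (x : F) : W.psiM m (W.psiP m x) + W.psiP m (W.psiM m x) = x :=
  LinearMap.congr_fun (W.B.ext fun f => W.psiM_psiP_basis_add_self f m :
    W.psiM m ∘ₗ W.psiP m + W.psiP m ∘ₗ W.psiM m = LinearMap.id) x

lemma psiM_psiP_add_of_ne {m n : ℤ} (hmn : m ≠ n) (x : F) :
    W.psiM m (W.psiP n x) + W.psiP n (W.psiM m x) = 0 :=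
  LinearMap.congr_fun (W.B.ext fun f => W.psiM_psiP_basis_add_of_ne f hmn :
    W.psiM m ∘ₗ W.psiP n + W.psiP n ∘ₗ W.psiM m = 0) x

noncomputable def wedge : (ℤ →₀ ℂ) →ₗ[ℂ] F →ₗ[ℂ] F := Finsupp.linearCombination ℂ W.psiP

lemma wedge_apply (c : ℤ →₀ ℂ) (x : F) : W.wedge c x = c.sum fun m a => a • W.psiP m x := by
  rw [wedge, Finsupp.linearCombination_apply, LinearMap.finsupp_sum_apply]
  rfl

lemma wedge_single (m : ℤ) (a : ℂ) : W.wedge (Finsupp.single m a) = a • W.psiP m :=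
  Finsupp.linearCombination_single ℂ a m

lemma wedge_eq_finsum (c : ℤ →₀ ℂ) (x : F) : W.wedge c x = ∑ᶠ m, c m • W.psiP m x := by
  rw [wedge_apply, Finsupp.sum, finsum_eq_sum_of_support_subset]
  intro m hm
  simpa using left_ne_zero_of_smul hm

lemma wedge_anticomm {A : F →ₗ[ℂ] F} (hA : ∀ n y, A (W.psiP n y) = -W.psiP n (A y))
    (c : ℤ →₀ ℂ) (x : F) : A (W.wedge c x) = -W.wedge c (A x) := by
  induction c using Finsupp.induction_linear with
  | zero => simp
  | add c d hc hd => simp only [map_add, LinearMap.add_apply, hc, hd, neg_add]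
  | single n a => simp [wedge_single, hA]

lemma psiP_wedge (m : ℤ) (c : ℤ →₀ ℂ) (x : F) :
    W.psiP m (W.wedge c x) = -W.wedge c (W.psiP m x) :=
  W.wedge_anticomm (W.psiP_psiP m) c x

lemma wedge_wedge (c : ℤ →₀ ℂ) (x : F) : W.wedge c (W.wedge c x) = 0 :=
  eq_zero_of_eq_neg ℂ <| W.wedge_anticomm
    (fun n y => by rw [W.psiP_wedge, neg_neg]) c x

lemma psiM_wedge (m : ℤ) (c : ℤ →₀ ℂ) (x : F) :
    W.psiM m (W.wedge c x) = c m • x - W.wedge c (W.psiM m x) := by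
  induction c using Finsupp.induction_linear with
  | zero => simp
  | add c d hc hd =>
    simp only [map_add, LinearMap.add_apply, hc, hd, Finsupp.add_apply, add_smul]
    abel
  | single n a =>
    simp only [wedge_single, LinearMap.smul_apply, map_smul, Finsupp.single_apply]
    rcases eq_or_ne n m with rfl | hnm
    · rw [if_pos rfl, ← smul_sub, eq_sub_of_add_eq (W.psiM_psiP_add_self n x)]
    · rw [if_neg hnm, zero_smul, zero_sub, ← smul_neg,
        eq_neg_of_add_eq_zero_left (W.psiM_psiP_add_of_ne hnm.symm x)]

noncomputable def kpBilinear (x : F) : F ⊗[ℂ] F := ∑ᶠ m, W.psiP m x ⊗ₜ[ℂ] W.psiM m x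

lemma eventually_psiP_eq_zero (x : F) : ∀ᶠ m in atBot, W.psiP m x = 0 :=
  eventually_eq_zero_of_basis W.B W.psiP
    (fun f => f.eventually_mem_entries.mono fun _ => W.psiP_basis_eq_zero) x

lemma eventually_psiM_eq_zero (x : F) : ∀ᶠ m in atTop, W.psiM m x = 0 :=
  eventually_eq_zero_of_basis W.B W.psiM
    (fun f => f.eventually_not_mem_entries.mono fun _ => W.psiM_basis_eq_zero) x

lemma hasFiniteSupport_kpBilinear (x : F) :
    (fun m => W.psiP m x ⊗ₜ[ℂ] W.psiM m x).HasFiniteSupport := by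
  refine Filter.eventually_cofinite.mp ?_
  rw [Int.cofinite_eq, eventually_sup]
  exact ⟨(W.eventually_psiP_eq_zero x).mono fun m h => by simp [h],
    (W.eventually_psiM_eq_zero x).mono fun m h => by simp [h]⟩

lemma kpBilinear_psiM (a : ℤ) (x : F) :
    W.kpBilinear (W.psiM a x) = map (W.psiM a) (W.psiM a) (W.kpBilinear x) := by
  rw [kpBilinear, kpBilinear, map_finsum _ (W.hasFiniteSupport_kpBilinear x)]
  refine finsum_congr fun m => ?_
  rw [map_tmul, W.psiM_psiM m a]
  rcases eq_or_ne a m with rfl | ham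
  · rw [W.psiM_psiM_self, neg_zero, tmul_zero, tmul_zero]
  · rw [eq_neg_of_add_eq_zero_right (W.psiM_psiP_add_of_ne ham x), neg_tmul, tmul_neg, neg_neg]

lemma kpBilinear_wedge (c : ℤ →₀ ℂ) (x : F) :
    W.kpBilinear (W.wedge c x) = map (W.wedge c) (W.wedge c) (W.kpBilinear x) := by
  let tmulX : F →ₗ[ℂ] F ⊗[ℂ] F := (TensorProduct.mk ℂ F F).flip x ∘ₗ W.wedge c
  have hterm : ∀ m, W.psiP m (W.wedge c x) ⊗ₜ[ℂ] W.psiM m (W.wedge c x) =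
      map (W.wedge c) (W.wedge c) (W.psiP m x ⊗ₜ[ℂ] W.psiM m x) - tmulX (c m • W.psiP m x) := by
    intro m
    simp only [tmulX, W.psiP_wedge, W.psiM_wedge, map_tmul, LinearMap.comp_apply, map_smul,
      LinearMap.flip_apply, mk_apply, neg_tmul, tmul_sub, tmul_smul, smul_neg]
    abel
  have hfin : (fun m => c m • W.psiP m x).HasFiniteSupport :=
    c.hasFiniteSupport.smul_left _
  rw [kpBilinear, finsum_congr hterm, finsum_sub_distrib
      ((W.hasFiniteSupport_kpBilinear x).fun_comp (map_zero _)) (hfin.fun_comp (map_zero _)),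
    ← map_finsum _ (W.hasFiniteSupport_kpBilinear x), ← map_finsum _ hfin, ← wedge_eq_finsum]
  simp [tmulX, wedge_wedge, kpBilinear]

def InOrbit (k : ℤ) (g : F) : Prop :=
  ∃ L : List (ℤ →₀ ℂ), g = L.foldr (fun c v => W.wedge c v) (W.B (vacSeq (k - L.length)))

variable {W}

lemma InOrbit.wedge {k : ℤ} {x : F} (hx : W.InOrbit (k - 1) x) (c : ℤ →₀ ℂ) :
    W.InOrbit k (W.wedge c x) := by
  obtain ⟨L, rfl⟩ := hx
  refine ⟨c :: L, ?_⟩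
  rw [List.foldr_cons, List.length_cons, Nat.cast_succ, sub_sub, add_comm (1 : ℤ)]

variable (W)

lemma inOrbit_smul_vacuum (a : ℂ) (k : ℤ) : W.InOrbit k (a • W.B (vacSeq k)) := by
  obtain ⟨j, rfl⟩ : ∃ j, k = j + 1 := ⟨k - 1, by ring⟩
  have hj : j + 1 ∉ (vacSeq j).entries := by simp [Maya.mem_entries_vacSeq]
  have h : a • W.B (vacSeq (j + 1)) = W.wedge (Finsupp.single (j + 1) a) (W.B (vacSeq j)) := by
    rw [wedge_single, LinearMap.smul_apply, W.psiP_basis_addEntry hj, Maya.addEntry_vacSeq,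
      Maya.pos_vacSeq, pow_zero, one_smul]
  rw [h]
  exact InOrbit.wedge ⟨[], by simp⟩ _

lemma kpBilinear_basis_vacSeq (k : ℤ) : W.kpBilinear (W.B (vacSeq k)) = 0 := by
  refine finsum_eq_zero_of_forall_eq_zero fun m => ?_
  rcases le_or_gt m k with h | h
  · rw [W.psiP_basis_eq_zero (Maya.mem_entries_vacSeq.mpr h), zero_tmul]
  · rw [W.psiM_basis_eq_zero (by simpa [Maya.mem_entries_vacSeq] using h), tmul_zero]

lemma kpBilinear_eq_zero_of_inOrbit {k : ℤ} {g : F} (hg : W.InOrbit k g) :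
    W.kpBilinear g = 0 := by
  obtain ⟨L, rfl⟩ := hg
  generalize k - L.length = j
  induction L with
  | nil => exact W.kpBilinear_basis_vacSeq j
  | cons c L ih => rw [List.foldr_cons, kpBilinear_wedge, ih, map_zero]

lemma exists_wedge_eq_zero {x : F} (hx : W.kpBilinear x = 0) (φ : F →ₗ[ℂ] ℂ) (a : ℤ) :
    ∃ v : ℤ →₀ ℂ, v a = φ (W.psiM a x) ∧ W.wedge v x = 0 := by
  classical
  let S : Finset ℤ := insert a (W.hasFiniteSupport_kpBilinear x).toFinset
  let contract : F ⊗[ℂ] F →ₗ[ℂ] F := (TensorProduct.rid ℂ F).toLinearMap ∘ₗ map LinearMap.id φ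
  refine ⟨∑ m ∈ S, Finsupp.single m (φ (W.psiM m x)), by simp [S, Finsupp.single_apply], ?_⟩
  have hS : Function.support (fun m => W.psiP m x ⊗ₜ[ℂ] W.psiM m x) ⊆ S := fun m hm =>
    Finset.mem_insert_of_mem ((W.hasFiniteSupport_kpBilinear x).mem_toFinset.mpr hm)
  rw [← map_zero contract, ← hx, kpBilinear, finsum_eq_sum_of_support_subset _ hS, map_sum,
    map_sum, LinearMap.sum_apply]
  refine Finset.sum_congr rfl fun m _ => ?_
  simp [contract, wedge_single]

lemma eq_wedge_psiM {v : ℤ →₀ ℂ} {g : F} (hv : W.wedge v g = 0) {a : ℤ} (ha : v a ≠ 0) :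
    g = W.wedge ((v a)⁻¹ • v) (W.psiM a g) := by
  have h := W.psiM_wedge a v g
  rw [hv, map_zero, eq_comm, sub_eq_zero] at h
  rw [map_smul, LinearMap.smul_apply, ← h, smul_smul, inv_mul_cancel₀ ha, one_smul]

lemma repr_psiM_basis_apply_zero {f f₀ : Maya} (hf : f.1 0 ≤ f₀.1 0) :
    W.B.repr (W.psiM (f₀.1 0) (W.B f)) (f₀.removeAt 0) = Finsupp.single f₀ 1 f := by
  classical
  rw [Finsupp.single_apply]
  rcases hf.lt_or_eq with hlt | heq
  · have hnot : f₀.1 0 ∉ f.entries := fun ⟨s, hs⟩ =>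
      (f.apply_le_apply_zero s).not_gt (hs ▸ hlt)
    rw [W.psiM_basis_eq_zero hnot, map_zero, Finsupp.zero_apply,
      if_neg (fun h : f₀ = f => hlt.ne (h ▸ rfl))]
  · rw [← heq, W.psiM_basis f (f.removeAt 0) _ 0 rfl rfl, pow_zero, one_smul, W.B.repr_self,
      Finsupp.single_apply]
    exact if_congr ⟨fun h => (Maya.eq_of_apply_zero_of_removeAt_zero heq h).symm, fun h => h ▸ rfl⟩ rfl rfl

lemma repr_psiM_apply_zero {g : F} {f₀ : Maya}
    (hmax : ∀ f ∈ (W.B.repr g).support, f.1 0 ≤ f₀.1 0) :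
    W.B.repr (W.psiM (f₀.1 0) g) (f₀.removeAt 0) = W.B.repr g f₀ := by
  classical
  conv_lhs => rw [← W.B.linearCombination_repr g, Finsupp.linearCombination_apply, Finsupp.sum,
    map_sum, map_sum, Finsupp.finsetSum_apply]
  rw [Finset.sum_congr rfl fun f hf => by
    rw [map_smul, map_smul, Finsupp.smul_apply, W.repr_psiM_basis_apply_zero (hmax f hf)]]
  simp [Finsupp.single_apply, eq_comm]

lemma exists_mem_span_vacuumFrom {k : ℤ} {g : F}
    (hg : g ∈ span ℂ (W.B '' {f : Maya | HasCharge f.1 k})) :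
    ∃ N, g ∈ span ℂ (W.B '' Maya.vacuumFrom N k) := by
  rw [Module.Basis.mem_span_image] at hg
  choose! N hN using fun f (hf : f ∈ (W.B.repr g).support) => hg hf
  refine ⟨(W.B.repr g).support.sup N, (Module.Basis.mem_span_image _).mpr fun f hf n hn => ?_⟩
  exact hN f hf n ((Finset.le_sup hf).trans hn)

lemma psiM_mem_span_vacuumFrom {N : ℕ} {k a : ℤ} (ha : k - N ≤ a) {g : F}
    (hg : g ∈ span ℂ (W.B '' Maya.vacuumFrom (N + 1) k)) :
    W.psiM a g ∈ span ℂ (W.B '' Maya.vacuumFrom N (k - 1)) := by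
  refine (span_le (p := (span ℂ _).comap (W.psiM a))).mpr ?_ hg
  rintro _ ⟨f, hf, rfl⟩
  change W.psiM a (W.B f) ∈ span ℂ _
  by_cases haf : a ∈ f.entries
  · obtain ⟨s, rfl⟩ := haf
    rw [W.psiM_basis f (f.removeAt s) _ s rfl rfl]
    exact smul_mem _ _ (subset_span ⟨_, Maya.removeAt_mem_vacuumFrom hf ha, rfl⟩)
  · rw [W.psiM_basis_eq_zero haf]
    exact zero_mem _

theorem inOrbit_of_kpBilinear_eq_zero (N : ℕ) {k : ℤ} {g : F}
    (hg : g ∈ span ℂ (W.B '' Maya.vacuumFrom N k)) (hkp : W.kpBilinear g = 0) :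
    W.InOrbit k g := by
  induction N generalizing k g with
  | zero =>
    rw [Maya.vacuumFrom_zero, Set.image_singleton, mem_span_singleton] at hg
    obtain ⟨a, rfl⟩ := hg
    exact W.inOrbit_smul_vacuum a k
  | succ N ih =>
    rcases eq_or_ne g 0 with rfl | hg0
    · simpa using W.inOrbit_smul_vacuum 0 k
    have hsupp : (W.B.repr g).support.Nonempty := by simpa using hg0
    obtain ⟨f₀, hf₀, hmax⟩ := (W.B.repr g).support.exists_max_image (fun f => f.1 0) hsupp
    obtain ⟨v, hva, hv⟩ := W.exists_wedge_eq_zero hkp (W.B.coord (f₀.removeAt 0)) (f₀.1 0)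
    have hv0 : v (f₀.1 0) ≠ 0 := by
      rw [hva, Module.Basis.coord_apply, W.repr_psiM_apply_zero hmax]
      exact Finsupp.mem_support_iff.mp hf₀
    have hf₀N : k - N ≤ f₀.1 0 := by
      have := f₀.strictAnti (Nat.succ_pos N)
      rw [(Module.Basis.mem_span_image _).mp hg hf₀ (N + 1) le_rfl] at this
      push_cast at this
      omega
    rw [W.eq_wedge_psiM hv hv0]
    exact (ih (W.psiM_mem_span_vacuumFrom hf₀N hg)
      (by rw [kpBilinear_psiM, hkp, map_zero])).wedge _

theorem inOrbit_iff_kpBilinear_eq_zero {k : ℤ} {g : F}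
    (hg : g ∈ span ℂ (W.B '' {f : Maya | HasCharge f.1 k})) :
    W.InOrbit k g ↔ W.kpBilinear g = 0 := by
  refine ⟨W.kpBilinear_eq_zero_of_inOrbit, fun hkp => ?_⟩
  obtain ⟨N, hN⟩ := W.exists_mem_span_vacuumFrom hg
  exact W.inOrbit_of_kpBilinear_eq_zero N hN hkp

end SemiInfiniteWedge

/-- Here `psiP m` is `ψ⁺_i` and `psiM m` is `ψ⁻_{-i}` for `m = -i + 1/2`, and membership in the
orbit `R(GL_∞)|k⟩` is expressed by `g` being a wedge `f_1 ∧ ⋯ ∧ f_r ∧ |k - r⟩`, wedging by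
`f = ∑_m c_m e_m` being the operator `∑_m c_m • psiP m`. -/
theorem orbit_iff_fermionic_KP_general
    {F : Type*} [AddCommGroup F] [Module ℂ F] (B : Module.Basis Maya ℂ F)
    (psiP psiM : ℤ → F →ₗ[ℂ] F)
    (hP0 : ∀ (f : Maya) (m : ℤ), (∃ s, f.1 s = m) → psiP m (B f) = 0)
    (hP : ∀ (f g : Maya) (m : ℤ) (s : ℕ), (∀ n, n < s ↔ m < f.1 n) →
      g.1 = insertAt f.1 m s → psiP m (B f) = ((-1 : ℂ)) ^ s • B g)
    (hM0 : ∀ (f : Maya) (m : ℤ), (∀ s, f.1 s ≠ m) → psiM m (B f) = 0)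
    (hM : ∀ (f g : Maya) (m : ℤ) (s : ℕ), f.1 s = m →
      g.1 = deleteAt f.1 s → psiM m (B f) = ((-1 : ℂ)) ^ s • B g)
    (k : ℤ) (g : F)
    (hgk : g ∈ Submodule.span ℂ (B '' {f : Maya | HasCharge f.1 k})) :
    (∃ L : List (ℤ →₀ ℂ),
        g = L.foldr (fun c v => c.sum fun m cm => cm • psiP m v)
              (B (vacSeq (k - L.length)))) ↔
      ∑ᶠ m : ℤ, (psiP m g) ⊗ₜ[ℂ] (psiM m g) = 0 := by
  let W : SemiInfiniteWedge F := ⟨B, psiP, psiM, hP0, hP, hM0, hM⟩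
  have hwedge : (fun c v => c.sum fun m cm => cm • psiP m v) = fun c v => W.wedge c v :=
    funext₂ fun c v => (W.wedge_apply c v).symm
  rw [hwedge]
  exact W.inOrbit_iff_kpBilinear_eq_zero hgk

/-- A nonzero `g ∈ F^{(k)}` lies in the `GL_∞`-orbit `O_k = R(GL_∞)|k⟩` if and only if
`∑_{i ∈ ℤ+1/2} ψ⁺_i g ⊗ ψ⁻_{-i} g = 0` in `F ⊗ F`.

Setup: `F` is the semi-infinite wedge space, presented by its monomial basis `B` and
the wedging/contraction operators `psiP m` (wedging by `e_m`, i.e. `ψ⁺_i` with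
`m = -i+1/2`) and `psiM m` (contraction of `e_m`, i.e. `ψ⁻_{-i}` for the same `i`), so
the bilinear sum reads `∑_{m ∈ ℤ} (psiP m g) ⊗ (psiM m g)`.  Membership in the orbit
`R(GL_∞)|k⟩` is expressed by `g` being a wedge `f_1 ∧ ⋯ ∧ f_r ∧ |k - r⟩` of finitely
many vectors `f_j = ∑_m c_{j,m} e_m` with the vacuum `|k - r⟩`, wedging by `f` being
the operator `∑_m c_m ψ⁺_m`. -/
theorem orbit_iff_fermionic_KP
    {F : Type*} [AddCommGroup F] [Module ℂ F] (B : Module.Basis Maya ℂ F)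
    (psiP psiM : ℤ → F →ₗ[ℂ] F)
    (hP0 : ∀ (f : Maya) (m : ℤ), (∃ s, f.1 s = m) → psiP m (B f) = 0)
    (hP : ∀ (f g : Maya) (m : ℤ) (s : ℕ), (∀ n, n < s ↔ m < f.1 n) →
      g.1 = insertAt f.1 m s → psiP m (B f) = ((-1 : ℂ)) ^ s • B g)
    (hM0 : ∀ (f : Maya) (m : ℤ), (∀ s, f.1 s ≠ m) → psiM m (B f) = 0)
    (hM : ∀ (f g : Maya) (m : ℤ) (s : ℕ), f.1 s = m →
      g.1 = deleteAt f.1 s → psiM m (B f) = ((-1 : ℂ)) ^ s • B g)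
    (k : ℤ) (g : F) (hg : g ≠ 0)
    (hgk : g ∈ Submodule.span ℂ (B '' {f : Maya | HasCharge f.1 k})) :
    (∃ L : List (ℤ →₀ ℂ),
        g = L.foldr (fun c v => c.sum fun m cm => cm • psiP m v)
              (B (vacSeq (k - L.length)))) ↔
      ∑ᶠ m : ℤ, (psiP m g) ⊗ₜ[ℂ] (psiM m g) = 0 :=
  orbit_iff_fermionic_KP_general B psiP psiM hP0 hP hM0 hM k g hgk
end
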